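/- Let Y : Σ → ℝ⁴₁ be a spacelike immersion of a surface into 4-dimensional Lorentz-Minkowski space, and suppose ξ = (ν,1) is a null section of the normal bundle of Y with |ν| ≡ 1, such that the mean curvature vector H of Y satisfies H · ξ ≡ 0. Then the map ν : Σ → S² is weakly conformal; more precisely, dξ · dξ = λ² (dY · dY) for some function λ on Σ. -/

import Mathlib

/- STATEMENT 0: A spacelike immersion Y : Σ → ℝ⁴₁ (in local coordinates on a domain
U ⊆ ℝ²) with a null normal section ξ = (ν,1), |ν| ≡ 1, whose mean curvature vector H
satisfies H·ξ ≡ 0, has weakly conformal ν : Σ → S²: dξ·dξ = λ²(dY·dY). -/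

noncomputable section
open scoped RealInnerProductSpace

abbrev E3 := EuclideanSpace ℝ (Fin 3)

/-- Lorentz-Minkowski inner product on ℝ⁴₁ = ℝ³ × ℝ, signature (+,+,+,−). -/
def mink (v w : E3 × ℝ) : ℝ := ⟪v.1, w.1⟫ - v.2 * w.2

/-- first partial derivatives -/
def pd (Y : ℝ × ℝ → E3 × ℝ) (i : Fin 2) (p : ℝ × ℝ) : E3 × ℝ :=
  fderiv ℝ Y p (if i = 0 then (1, 0) else (0, 1))

/-- second partial derivatives -/
def pd2 (Y : ℝ × ℝ → E3 × ℝ) (i j : Fin 2) (p : ℝ × ℝ) : E3 × ℝ :=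
  fderiv ℝ (pd Y i) p (if j = 0 then (1, 0) else (0, 1))

/-- induced metric coefficients g_{ij} = ∂ᵢY · ∂ⱼY -/
def indMet (Y : ℝ × ℝ → E3 × ℝ) (i j : Fin 2) (p : ℝ × ℝ) : ℝ := mink (pd Y i p) (pd Y j p)

/- ### auxiliary lemmas -/

lemma mink_comm (v w : E3 × ℝ) : mink v w = mink w v := by
  simp only [mink, real_inner_comm]; ring

lemma mink_add_left (v w u : E3 × ℝ) : mink (v + w) u = mink v u + mink w u := by
  simp only [mink, Prod.fst_add, Prod.snd_add, inner_add_left]; ring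

lemma mink_smul_left (c : ℝ) (v u : E3 × ℝ) : mink (c • v) u = c * mink v u := by
  simp only [mink, Prod.smul_fst, Prod.smul_snd, real_inner_smul_left, smul_eq_mul]; ring

lemma mink_add_right (v w u : E3 × ℝ) : mink u (v + w) = mink u v + mink u w := by
  simp only [mink, Prod.fst_add, Prod.snd_add, inner_add_right]; ring

lemma mink_smul_right (c : ℝ) (v u : E3 × ℝ) : mink u (c • v) = c * mink u v := by
  simp only [mink, Prod.smul_fst, Prod.smul_snd, real_inner_smul_right, smul_eq_mul]; ring

lemma mink_sub_left (v w u : E3 × ℝ) : mink (v - w) u = mink v u - mink w u := by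
  simp only [mink, Prod.fst_sub, Prod.snd_sub, inner_sub_left]; ring

lemma mink_zero_right (u : E3 × ℝ) : mink u 0 = 0 := by simp [mink]

/-- Key pointwise linear algebra fact: a vector `v` that is `mink`-orthogonal to a
spacelike plane `span {Y0, Y1}` and to a nonzero null vector `xi` orthogonal to that
plane must itself be null. -/
lemma perp_null (Y0 Y1 xi v : E3 × ℝ)
    (hdet : mink Y0 Y0 * mink Y1 Y1 - (mink Y0 Y1) ^ 2 ≠ 0)
    (hxi2 : xi.2 = 1)
    (hxiY0 : mink xi Y0 = 0) (hxiY1 : mink xi Y1 = 0) (hxixi : mink xi xi = 0)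
    (hv0 : mink v Y0 = 0) (hv1 : mink v Y1 = 0) (hvxi : mink v xi = 0) :
    mink v v = 0 := by
  by_contra hvv
  by_cases hLI : LinearIndependent ℝ ![Y0, Y1, v, xi]
  · have hcard : Fintype.card (Fin 4) = Module.finrank ℝ (E3 × ℝ) := by
      simp [Module.finrank_prod, finrank_euclideanSpace_fin]
    have hsp := hLI.span_eq_top_of_card_eq_finrank hcard
    have hall : ∀ x : E3 × ℝ, mink xi x = 0 := by
      intro x
      have hx : x ∈ Submodule.span ℝ (Set.range ![Y0, Y1, v, xi]) := hsp ▸ Submodule.mem_top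
      induction hx using Submodule.span_induction with
      | mem y hy =>
        obtain ⟨i, rfl⟩ := hy
        fin_cases i <;> simp only [Matrix.cons_val_zero, Matrix.cons_val_one, Matrix.head_cons,
          Matrix.cons_val_two, Matrix.tail_cons, Matrix.cons_val_three] <;>
          first
          | exact hxiY0
          | exact hxiY1
          | exact hxixi
          | rw [mink_comm]; exact hvxi
      | zero => exact mink_zero_right _
      | add y z _ _ hy hz => rw [mink_add_right, hy, hz]; ring
      | smul c y _ hy => rw [mink_smul_right, hy]; ring
    have h1 : mink xi ((0 : E3), (1 : ℝ)) = -1 := by simp [mink, hxi2]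
    rw [hall _] at h1; norm_num at h1
  · obtain ⟨c, hsum, i, hi⟩ := Fintype.not_linearIndependent_iff.mp hLI
    have hsum4 : c 0 • Y0 + c 1 • Y1 + c 2 • v + c 3 • xi = 0 := by
      have := hsum
      rw [Fin.sum_univ_four] at this
      simpa using this
    have key : ∀ u : E3 × ℝ, c 0 * mink u Y0 + c 1 * mink u Y1 + c 2 * mink u v
        + c 3 * mink u xi = 0 := by
      intro u
      have := congrArg (mink u) hsum4
      rw [mink_add_right, mink_add_right, mink_add_right, mink_smul_right, mink_smul_right,
        mink_smul_right, mink_smul_right, mink_zero_right] at this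
      linarith
    have e0 := key Y0
    have e1 := key Y1
    have e2 := key v
    have hY0v : mink Y0 v = 0 := (mink_comm Y0 v).trans hv0
    have hY1v : mink Y1 v = 0 := (mink_comm Y1 v).trans hv1
    have hY0xi : mink Y0 xi = 0 := (mink_comm Y0 xi).trans hxiY0
    have hY1xi : mink Y1 xi = 0 := (mink_comm Y1 xi).trans hxiY1
    have hY10 : mink Y1 Y0 = mink Y0 Y1 := mink_comm _ _
    rw [hY0v, hY0xi] at e0
    rw [hY1v, hY1xi, hY10] at e1
    rw [hv0, hv1, hvxi] at e2
    have hc0 : c 0 = 0 := by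
      have h : c 0 * (mink Y0 Y0 * mink Y1 Y1 - (mink Y0 Y1) ^ 2) = 0 := by
        linear_combination mink Y1 Y1 * e0 - mink Y0 Y1 * e1
      exact (mul_eq_zero.mp h).resolve_right hdet
    have hc1 : c 1 = 0 := by
      have h : c 1 * (mink Y0 Y0 * mink Y1 Y1 - (mink Y0 Y1) ^ 2) = 0 := by
        linear_combination mink Y0 Y0 * e1 - mink Y0 Y1 * e0
      exact (mul_eq_zero.mp h).resolve_right hdet
    have hc2 : c 2 = 0 := by
      have h : c 2 * mink v v = 0 := by linear_combination e2
      exact (mul_eq_zero.mp h).resolve_right hvv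
    have hc3 : c 3 = 0 := by
      rw [hc0, hc1, hc2] at hsum4
      simp only [zero_smul, zero_add] at hsum4
      have := congrArg Prod.snd hsum4
      simp only [Prod.smul_snd, Prod.snd_zero, smul_eq_mul, hxi2, mul_one] at this
      exact this
    fin_cases i <;> simp_all

/-- Two vectors orthogonal to the spacelike plane and to the null normal `xi` are
`mink`-orthogonal to each other. -/
lemma perp_null_pair (Y0 Y1 xi v w : E3 × ℝ)
    (hdet : mink Y0 Y0 * mink Y1 Y1 - (mink Y0 Y1) ^ 2 ≠ 0)
    (hxi2 : xi.2 = 1)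
    (hxiY0 : mink xi Y0 = 0) (hxiY1 : mink xi Y1 = 0) (hxixi : mink xi xi = 0)
    (hv0 : mink v Y0 = 0) (hv1 : mink v Y1 = 0) (hvxi : mink v xi = 0)
    (hw0 : mink w Y0 = 0) (hw1 : mink w Y1 = 0) (hwxi : mink w xi = 0) :
    mink v w = 0 := by
  have hv := perp_null Y0 Y1 xi v hdet hxi2 hxiY0 hxiY1 hxixi hv0 hv1 hvxi
  have hw := perp_null Y0 Y1 xi w hdet hxi2 hxiY0 hxiY1 hxixi hw0 hw1 hwxi
  have hvw := perp_null Y0 Y1 xi (v + w) hdet hxi2 hxiY0 hxiY1 hxixi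
    (by rw [mink_add_left, hv0, hw0]; ring)
    (by rw [mink_add_left, hv1, hw1]; ring)
    (by rw [mink_add_left, hvxi, hwxi]; ring)
  rw [mink_add_left, mink_add_right, mink_add_right, hv, hw, mink_comm w v] at hvw
  linarith

lemma fderiv_mink_apply {f g : ℝ × ℝ → E3 × ℝ} {p : ℝ × ℝ}
    (hf : DifferentiableAt ℝ f p) (hg : DifferentiableAt ℝ g p) (e : ℝ × ℝ) :
    fderiv ℝ (fun q => mink (f q) (g q)) p e
      = mink (fderiv ℝ f p e) (g p) + mink (f p) (fderiv ℝ g p e) := by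
  have h1 : (fun q => mink (f q) (g q))
      = fun q => (⟪(f q).1, (g q).1⟫ : ℝ) - (f q).2 * (g q).2 := rfl
  have hinner : DifferentiableAt ℝ (fun q => (⟪(f q).1, (g q).1⟫ : ℝ)) p :=
    (hf.fst).inner ℝ (hg.fst)
  have hmul : DifferentiableAt ℝ (fun q => (f q).2 * (g q).2) p := (hf.snd).mul (hg.snd)
  rw [h1, fderiv_fun_sub hinner hmul]
  rw [ContinuousLinearMap.sub_apply]
  rw [fderiv_inner_apply ℝ (hf.fst) (hg.fst) e]
  rw [fderiv_fun_mul (hf.snd) (hg.snd)]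
  rw [fderiv.fst hf, fderiv.snd hf, fderiv.fst hg, fderiv.snd hg]
  simp only [ContinuousLinearMap.comp_apply, ContinuousLinearMap.coe_fst',
    ContinuousLinearMap.coe_snd', ContinuousLinearMap.add_apply, ContinuousLinearMap.smul_apply,
    smul_eq_mul, mink, real_inner_comm]
  ring

/-- the two coordinate directions -/
def dvec : Fin 2 → ℝ × ℝ := fun i => if i = 0 then (1, 0) else (0, 1)

lemma pd_eq (Y : ℝ × ℝ → E3 × ℝ) (i : Fin 2) :
    pd Y i = fun q => fderiv ℝ Y q (dvec i) := rfl

lemma pd2_eq (Y : ℝ × ℝ → E3 × ℝ) (i j : Fin 2) (p : ℝ × ℝ) :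
    pd2 Y i j p = fderiv ℝ (pd Y i) p (dvec j) := rfl

set_option maxHeartbeats 2000000 in
theorem stmt0_weak_conformality_of_null_mean_curvature_direction
    (U : Set (ℝ × ℝ)) (hU : IsOpen U)
    (Y : ℝ × ℝ → E3 × ℝ) (ν : ℝ × ℝ → E3)
    (hYsm : ContDiffOn ℝ (⊤ : ℕ∞) Y U) (hνsm : ContDiffOn ℝ (⊤ : ℕ∞) ν U)
    -- Y is a spacelike immersion: induced metric positive definite
    (hspacelike : ∀ p ∈ U, 0 < indMet Y 0 0 p ∧
      0 < indMet Y 0 0 p * indMet Y 1 1 p - (indMet Y 0 1 p)^2)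
    -- ξ = (ν,1) with |ν| ≡ 1 (hence ξ is a null vector)
    (hν1 : ∀ p ∈ U, ‖ν p‖ = 1)
    -- ξ is a section of the normal bundle of Y
    (hnormal : ∀ p ∈ U, ∀ i : Fin 2, mink (pd Y i p) (ν p, 1) = 0)
    -- the mean curvature vector H (trace of the second fundamental form w.r.t. the
    -- induced metric) satisfies H·ξ ≡ 0, written with the cofactor form of g⁻¹:
    (hHxi : ∀ p ∈ U,
      indMet Y 1 1 p * mink (pd2 Y 0 0 p) (ν p, 1)
        - 2 * indMet Y 0 1 p * mink (pd2 Y 0 1 p) (ν p, 1)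
        + indMet Y 0 0 p * mink (pd2 Y 1 1 p) (ν p, 1) = 0) :
    -- conclusion: ν is weakly conformal, dξ·dξ = λ² (dY·dY); note that for
    -- ξ = (ν,1) one has dξ·dξ = dν·dν (Euclidean inner product on ℝ³).
    ∃ lam : ℝ × ℝ → ℝ, ∀ p ∈ U, ∀ v w : ℝ × ℝ,
      ⟪fderiv ℝ ν p v, fderiv ℝ ν p w⟫ =
        (lam p)^2 * mink (fderiv ℝ Y p v) (fderiv ℝ Y p w) := by
  classical
  refine ⟨fun p => Real.sqrt (((mink (pd2 Y 0 1 p) (ν p, 1))^2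
      - mink (pd2 Y 0 0 p) (ν p, 1) * mink (pd2 Y 1 1 p) (ν p, 1))
      / (indMet Y 0 0 p * indMet Y 1 1 p - (indMet Y 0 1 p)^2)), ?_⟩
  intro p hp v w
  have hmem : U ∈ nhds p := hU.mem_nhds hp
  -- differentiability bookkeeping
  have hYat : ContDiffAt ℝ (⊤ : ℕ∞) Y p := hYsm.contDiffAt hmem
  have hνat : DifferentiableAt ℝ ν p := (hνsm.contDiffAt hmem).differentiableAt (by simp)
  have hfY : ContDiffOn ℝ 1 (fderiv ℝ Y) U := hYsm.fderiv_of_isOpen hU (WithTop.coe_le_coe.mpr le_top)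
  have hdY : DifferentiableAt ℝ (fderiv ℝ Y) p :=
    ((hfY.differentiableOn one_ne_zero).differentiableAt hmem)
  have hpdd : ∀ i, DifferentiableAt ℝ (pd Y i) p := by
    intro i
    rw [pd_eq]
    exact hdY.clm_apply (differentiableAt_const _)
  have hpd2e : ∀ i j, pd2 Y i j p = fderiv ℝ (fderiv ℝ Y) p (dvec j) (dvec i) := by
    intro i j
    rw [pd2_eq, pd_eq]
    rw [fderiv_clm_apply hdY (differentiableAt_const _)]
    simp
  have hsymm : pd2 Y 0 1 p = pd2 Y 1 0 p := by
    rw [hpd2e, hpd2e]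
    exact (hYat.isSymmSndFDerivAt (by rw [minSmoothness_of_isRCLikeNormedField]; exact WithTop.coe_le_coe.mpr le_top)) _ _
  -- ξ = (ν, 1)
  have hξd : DifferentiableAt ℝ (fun q => ((ν q, (1 : ℝ)) : E3 × ℝ)) p :=
    hνat.prodMk (differentiableAt_const _)
  have hξder : ∀ e : ℝ × ℝ, fderiv ℝ (fun q => ((ν q, (1 : ℝ)) : E3 × ℝ)) p e
      = (fderiv ℝ ν p e, 0) := by
    intro e
    rw [DifferentiableAt.fderiv_prodMk hνat (differentiableAt_const _)]
    simp
  -- derivatives of identities valid on U vanish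
  have hzero : ∀ (F : ℝ × ℝ → ℝ) (c : ℝ), (∀ q ∈ U, F q = c) → fderiv ℝ F p = 0 := by
    intro F c h
    have hev : F =ᶠ[nhds p] fun _ => c := Filter.eventuallyEq_of_mem hmem h
    rw [hev.fderiv_eq]
    exact fderiv_const_apply c
  -- ⟪ν', ν⟫ = 0
  have hort : ∀ e : ℝ × ℝ, ⟪fderiv ℝ ν p e, ν p⟫ = 0 := by
    intro e
    have hνν : ∀ q ∈ U, (⟪ν q, ν q⟫ : ℝ) = 1 := fun q hq => by
      rw [real_inner_self_eq_norm_mul_norm, hν1 q hq]; norm_num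
    have hD := hzero _ 1 hνν
    have happ := fderiv_inner_apply ℝ hνat hνat e
    rw [hD] at happ
    simp only [ContinuousLinearMap.zero_apply] at happ
    have hc := real_inner_comm (ν p) (fderiv ℝ ν p e)
    linarith
  -- tangential components of ξ' : mink (pd Y i p) (ν'_j, 0) = -h i j
  have hA : ∀ i j : Fin 2, mink (pd Y i p) (fderiv ℝ ν p (dvec j), 0)
      = -(mink (pd2 Y i j p) (ν p, 1)) := by
    intro i j
    have hD := hzero (fun q => mink (pd Y i q) (ν q, 1)) 0 (fun q hq => hnormal q hq i)
    have happ := fderiv_mink_apply (hpdd i) hξd (dvec j)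
    rw [hD] at happ
    simp only [ContinuousLinearMap.zero_apply] at happ
    rw [hξder (dvec j)] at happ
    rw [← pd2_eq] at happ
    linarith
  -- scalar abbreviations
  set g00 := indMet Y 0 0 p with hg00d
  set g01 := indMet Y 0 1 p with hg01d
  set g11 := indMet Y 1 1 p with hg11d
  set h00 := mink (pd2 Y 0 0 p) (ν p, 1) with hh00d
  set h01 := mink (pd2 Y 0 1 p) (ν p, 1) with hh01d
  set h11 := mink (pd2 Y 1 1 p) (ν p, 1) with hh11d
  set D := g00 * g11 - g01 ^ 2 with hDd
  obtain ⟨hg00pos, hDpos⟩ := hspacelike p hp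
  rw [← hg00d, ← hg01d, ← hg11d, ← hDd] at hDpos
  have hDne : D ≠ 0 := ne_of_gt hDpos
  have htrace : g11 * h00 - 2 * g01 * h01 + g00 * h11 = 0 := hHxi p hp
  have hg11pos : 0 < g11 := by nlinarith [sq_nonneg g01]
  have hsy : mink (pd2 Y 1 0 p) (ν p, 1) = h01 := by rw [hh01d, hsymm]
  -- basic mink values
  have hgval : indMet Y 1 0 p = g01 := mink_comm _ _
  have hxi2 : ((ν p, (1:ℝ)) : E3 × ℝ).2 = 1 := rfl
  have hxixi : mink ((ν p, (1:ℝ)) : E3 × ℝ) ((ν p, (1:ℝ)) : E3 × ℝ) = 0 := by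
    simp only [mink]
    rw [real_inner_self_eq_norm_mul_norm, hν1 p hp]; norm_num
  have hxiY : ∀ i, mink ((ν p, (1:ℝ)) : E3 × ℝ) (pd Y i p) = 0 := fun i =>
    (mink_comm _ _).trans (hnormal p hp i)
  -- the vectors
  set Y0 := pd Y 0 p with hY0d
  set Y1 := pd Y 1 p with hY1d
  set n0 := fderiv ℝ ν p (dvec 0) with hn0d
  set n1 := fderiv ℝ ν p (dvec 1) with hn1d
  set x0 : E3 × ℝ := (n0, 0) with hx0d
  set x1 : E3 × ℝ := (n1, 0) with hx1d
  have hA00 : mink Y0 x0 = -h00 := by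
    have h := hA 0 0
    rw [← hY0d, ← hn0d, ← hx0d, ← hh00d] at h; exact h
  have hA01 : mink Y0 x1 = -h01 := by
    have h := hA 0 1
    rw [← hY0d, ← hn1d, ← hx1d, ← hh01d] at h; exact h
  have hA10 : mink Y1 x0 = -h01 := by
    have h := hA 1 0
    rw [← hY1d, ← hn0d, ← hx0d, hsy] at h; exact h
  have hA11 : mink Y1 x1 = -h11 := by
    have h := hA 1 1
    rw [← hY1d, ← hn1d, ← hx1d, ← hh11d] at h; exact h
  have hB0 : mink x0 ((ν p, (1:ℝ)) : E3 × ℝ) = 0 := by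
    have h := hort (dvec 0)
    rw [← hn0d] at h
    simp only [hx0d, mink, h]; ring
  have hB1 : mink x1 ((ν p, (1:ℝ)) : E3 × ℝ) = 0 := by
    have h := hort (dvec 1)
    rw [← hn1d] at h
    simp only [hx1d, mink, h]; ring
  -- metric values
  have hm00 : mink Y0 Y0 = g00 := by rw [hg00d, hY0d]; rfl
  have hm01 : mink Y0 Y1 = g01 := by rw [hg01d, hY0d, hY1d]; rfl
  have hm11 : mink Y1 Y1 = g11 := by rw [hg11d, hY1d]; rfl
  have hm10 : mink Y1 Y0 = g01 := by rw [mink_comm]; exact hm01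
  have hdet' : mink Y0 Y0 * mink Y1 Y1 - (mink Y0 Y1) ^ 2 ≠ 0 := by
    rw [hm00, hm01, hm11, ← hDd]; exact hDne
  have hY0xi : mink Y0 ((ν p, (1:ℝ)) : E3 × ℝ) = 0 := by rw [hY0d]; exact hnormal p hp 0
  have hY1xi : mink Y1 ((ν p, (1:ℝ)) : E3 × ℝ) = 0 := by rw [hY1d]; exact hnormal p hp 1
  have hxiY0 : mink ((ν p, (1:ℝ)) : E3 × ℝ) Y0 = 0 := by rw [mink_comm]; exact hY0xi
  have hxiY1 : mink ((ν p, (1:ℝ)) : E3 × ℝ) Y1 = 0 := by rw [mink_comm]; exact hY1xi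
  -- Cramer coefficients (scaled by D)
  set c00 := g01 * h01 - g11 * h00 with hc00d
  set c01 := g01 * h00 - g00 * h01 with hc01d
  set c10 := g01 * h11 - g11 * h01 with hc10d
  set c11 := g01 * h01 - g00 * h11 with hc11d
  set N0 : E3 × ℝ := D • x0 - c00 • Y0 - c01 • Y1 with hN0d
  set N1 : E3 × ℝ := D • x1 - c10 • Y0 - c11 • Y1 with hN1d
  have hN0Y0 : mink N0 Y0 = 0 := by
    rw [hN0d, mink_sub_left, mink_sub_left, mink_smul_left, mink_smul_left, mink_smul_left,
      mink_comm x0 Y0, hA00, hm00, hm10, hc00d, hc01d, hDd]; ring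
  have hN0Y1 : mink N0 Y1 = 0 := by
    rw [hN0d, mink_sub_left, mink_sub_left, mink_smul_left, mink_smul_left, mink_smul_left,
      mink_comm x0 Y1, hA10, hm01, hm11, hc00d, hc01d, hDd]; ring
  have hN1Y0 : mink N1 Y0 = 0 := by
    rw [hN1d, mink_sub_left, mink_sub_left, mink_smul_left, mink_smul_left, mink_smul_left,
      mink_comm x1 Y0, hA01, hm00, hm10, hc10d, hc11d, hDd]; ring
  have hN1Y1 : mink N1 Y1 = 0 := by
    rw [hN1d, mink_sub_left, mink_sub_left, mink_smul_left, mink_smul_left, mink_smul_left,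
      mink_comm x1 Y1, hA11, hm01, hm11, hc10d, hc11d, hDd]; ring
  have hN0xi : mink N0 ((ν p, (1:ℝ)) : E3 × ℝ) = 0 := by
    rw [hN0d, mink_sub_left, mink_sub_left, mink_smul_left, mink_smul_left, mink_smul_left,
      hB0, hY0xi, hY1xi]; ring
  have hN1xi : mink N1 ((ν p, (1:ℝ)) : E3 × ℝ) = 0 := by
    rw [hN1d, mink_sub_left, mink_sub_left, mink_smul_left, mink_smul_left, mink_smul_left,
      hB1, hY0xi, hY1xi]; ring
  have hNN00 : mink N0 N0 = 0 :=
    perp_null Y0 Y1 _ N0 hdet' hxi2 hxiY0 hxiY1 hxixi hN0Y0 hN0Y1 hN0xi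
  have hNN11 : mink N1 N1 = 0 :=
    perp_null Y0 Y1 _ N1 hdet' hxi2 hxiY0 hxiY1 hxixi hN1Y0 hN1Y1 hN1xi
  have hNN01 : mink N0 N1 = 0 :=
    perp_null_pair Y0 Y1 _ N0 N1 hdet' hxi2 hxiY0 hxiY1 hxixi
      hN0Y0 hN0Y1 hN0xi hN1Y0 hN1Y1 hN1xi
  -- representation of D • x_j
  have hrep0 : D • x0 = N0 + c00 • Y0 + c01 • Y1 := by rw [hN0d]; abel
  have hrep1 : D • x1 = N1 + c10 • Y0 + c11 • Y1 := by rw [hN1d]; abel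
  -- expansion helper
  have expand : ∀ (N M : E3 × ℝ) (a b a' b' : ℝ),
      mink N Y0 = 0 → mink N Y1 = 0 → mink M Y0 = 0 → mink M Y1 = 0 → mink N M = 0 →
      mink (N + a • Y0 + b • Y1) (M + a' • Y0 + b' • Y1)
        = a * a' * g00 + (a * b' + b * a') * g01 + b * b' * g11 := by
    intro N M a b a' b' h1 h2 h3 h4 h5
    have h3' : mink Y0 M = 0 := by rw [mink_comm]; exact h3
    have h4' : mink Y1 M = 0 := by rw [mink_comm]; exact h4
    simp only [mink_add_left, mink_add_right, mink_smul_left, mink_smul_right]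
    rw [h5, h1, h2, h3', h4', hm00, hm01, hm10, hm11]; ring
  have q00 : D ^ 2 * mink x0 x0 = c00 ^ 2 * g00 + 2 * c00 * c01 * g01 + c01 ^ 2 * g11 := by
    have h := expand N0 N0 c00 c01 c00 c01 hN0Y0 hN0Y1 hN0Y0 hN0Y1 hNN00
    rw [← hrep0, mink_smul_left, mink_smul_right] at h
    linear_combination h
  have q01 : D ^ 2 * mink x0 x1
      = c00 * c10 * g00 + (c00 * c11 + c01 * c10) * g01 + c01 * c11 * g11 := by
    have h := expand N0 N1 c00 c01 c10 c11 hN0Y0 hN0Y1 hN1Y0 hN1Y1 hNN01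
    rw [← hrep0, ← hrep1, mink_smul_left, mink_smul_right] at h
    linear_combination h
  have q11 : D ^ 2 * mink x1 x1 = c10 ^ 2 * g00 + 2 * c10 * c11 * g01 + c11 ^ 2 * g11 := by
    have h := expand N1 N1 c10 c11 c10 c11 hN1Y0 hN1Y1 hN1Y0 hN1Y1 hNN11
    rw [← hrep1, mink_smul_left, mink_smul_right] at h
    linear_combination h
  -- nonnegativity of the conformal factor
  have hnum : 0 ≤ h01 ^ 2 - h00 * h11 := by
    have h1 : g00 * g11 * (h01 ^ 2 - h00 * h11)
        = (g11 * h00 - g01 * h01) ^ 2 + D * h01 ^ 2 := by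
      rw [hDd]; linear_combination (-(g11 * h00)) * htrace
    have h2 : 0 ≤ g00 * g11 * (h01 ^ 2 - h00 * h11) := by
      rw [h1]
      exact add_nonneg (sq_nonneg _) (mul_nonneg hDpos.le (sq_nonneg _))
    exact (mul_nonneg_iff_of_pos_left (mul_pos hg00pos hg11pos)).mp h2
  have hlam2 : Real.sqrt ((h01 ^ 2 - h00 * h11) / D) ^ 2 = (h01 ^ 2 - h00 * h11) / D :=
    Real.sq_sqrt (div_nonneg hnum hDpos.le)
  -- the three scalar identities
  have hip : ∀ a b : E3, (⟪a, b⟫ : ℝ) = mink (a, 0) (b, 0) := by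
    intro a b; simp [mink]
  have I00 : (⟪n0, n0⟫ : ℝ) = (h01 ^ 2 - h00 * h11) / D * g00 := by
    rw [hip, ← hx0d, div_mul_eq_mul_div, eq_div_iff hDne]
    refine mul_right_cancel₀ hDne ?_
    rw [hc00d, hc01d, hDd] at q00
    rw [hDd]
    linear_combination q00 + ((g00 * g11 - g01 ^ 2) * h00) * htrace
  have I01 : (⟪n0, n1⟫ : ℝ) = (h01 ^ 2 - h00 * h11) / D * g01 := by
    rw [hip, ← hx0d, ← hx1d, div_mul_eq_mul_div, eq_div_iff hDne]
    refine mul_right_cancel₀ hDne ?_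
    rw [hc00d, hc01d, hc10d, hc11d, hDd] at q01
    rw [hDd]
    linear_combination q01 + ((g00 * g11 - g01 ^ 2) * h01) * htrace
  have I11 : (⟪n1, n1⟫ : ℝ) = (h01 ^ 2 - h00 * h11) / D * g11 := by
    rw [hip, ← hx1d, div_mul_eq_mul_div, eq_div_iff hDne]
    refine mul_right_cancel₀ hDne ?_
    rw [hc10d, hc11d, hDd] at q11
    rw [hDd]
    linear_combination q11 + ((g00 * g11 - g01 ^ 2) * h11) * htrace
  have I10 : (⟪n1, n0⟫ : ℝ) = (h01 ^ 2 - h00 * h11) / D * g01 := by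
    rw [real_inner_comm]; exact I01
  -- bilinear extension to arbitrary directions
  have hbase : ∀ u : ℝ × ℝ, u = u.1 • dvec 0 + u.2 • dvec 1 := by
    intro u
    simp [dvec, Prod.ext_iff]
  have hvrep : ∀ u : ℝ × ℝ, fderiv ℝ ν p u = u.1 • n0 + u.2 • n1 := by
    intro u
    conv_lhs => rw [hbase u]
    rw [map_add, map_smul, map_smul, ← hn0d, ← hn1d]
  have hYrep : ∀ u : ℝ × ℝ, fderiv ℝ Y p u = u.1 • Y0 + u.2 • Y1 := by
    intro u
    conv_lhs => rw [hbase u]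
    rw [map_add, map_smul, map_smul]
    have e0 : fderiv ℝ Y p (dvec 0) = Y0 := by rw [hY0d]; rfl
    have e1 : fderiv ℝ Y p (dvec 1) = Y1 := by rw [hY1d]; rfl
    rw [e0, e1]
  rw [hvrep v, hvrep w, hYrep v, hYrep w, hlam2]
  simp only [inner_add_left, inner_add_right, real_inner_smul_left, real_inner_smul_right,
    mink_add_left, mink_add_right, mink_smul_left, mink_smul_right]
  rw [I00, I01, I10, I11, hm00, hm01, hm10, hm11]
  ring
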